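/- Let N ≥ 1 and let u : ℝ³ → ℝ and ψ : ℝ³ → ℝ^N be smooth functions of (x, y, t) satisfying the Jordan KdV system u_y = u_xxx + 3∂_x(u² − ⟨ψ,ψ⟩), ψ_y = ψ_xxx + 6∂_x(uψ), together with its fifth-order symmetry u_t = u_xxxxx + 5∂_x(2u u_xx + u_x² + 2u³ − 6u⟨ψ,ψ⟩ − 2⟨ψ,ψ_xx⟩ − ⟨ψ_x,ψ_x⟩), ψ_t = ψ_xxxxx + 10∂_x(uψ_xx + u_xψ_x + u_xxψ + 3u²ψ − ⟨ψ,ψ⟩ψ). Then the functions v := 6u and q := 6u_xx + 18u² − 18⟨ψ,ψ⟩ satisfy the two-dimensional Sawada–Kotera equation −9v_t = v_xxxxx + 5(v v_xxx + v_x v_xx + v² v_x − v_xxy − v v_y − q v_x − q_y) together with the constraint q_x = v_y. -/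

import Mathlib

noncomputable def pdx {V : Type*} [NormedAddCommGroup V] [NormedSpace ℝ V]
    (f : ℝ → ℝ → ℝ → V) : ℝ → ℝ → ℝ → V :=
  fun x y t => deriv (fun s => f s y t) x

noncomputable def pdy {V : Type*} [NormedAddCommGroup V] [NormedSpace ℝ V]
    (f : ℝ → ℝ → ℝ → V) : ℝ → ℝ → ℝ → V :=
  fun x y t => deriv (fun s => f x s t) y

noncomputable def pdt {V : Type*} [NormedAddCommGroup V] [NormedSpace ℝ V]
    (f : ℝ → ℝ → ℝ → V) : ℝ → ℝ → ℝ → V :=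
  fun x y t => deriv (fun s => f x y s) t

def dot {N : ℕ} (a b : Fin N → ℝ) : ℝ := ∑ i, a i * b i

section infra

variable {V : Type*} [NormedAddCommGroup V] [NormedSpace ℝ V]

def unc (f : ℝ → ℝ → ℝ → V) : ℝ × ℝ × ℝ → V := fun p => f p.1 p.2.1 p.2.2

def Sm (f : ℝ → ℝ → ℝ → V) : Prop := ContDiff ℝ (⊤ : ℕ∞) (unc f)

lemma le_top' {n : ℕ} : (n : WithTop ℕ∞) ≤ ((⊤ : ℕ∞) : WithTop ℕ∞) := by
  exact_mod_cast (le_top : (n : ℕ∞) ≤ ⊤)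

lemma top_add_one : ((⊤ : ℕ∞) : WithTop ℕ∞) + 1 ≤ ((⊤ : ℕ∞) : WithTop ℕ∞) := by
  exact_mod_cast (by simp : (⊤ : ℕ∞) + 1 ≤ (⊤ : ℕ∞))

lemma hasDerivAt_sliceX (y t : ℝ) (x : ℝ) :
    HasDerivAt (fun s : ℝ => ((s, y, t) : ℝ × ℝ × ℝ)) (1, 0, 0) x :=
  (hasDerivAt_id x).prodMk ((hasDerivAt_const x y).prodMk (hasDerivAt_const x t))

lemma hasDerivAt_sliceY (x t : ℝ) (y : ℝ) :
    HasDerivAt (fun s : ℝ => ((x, s, t) : ℝ × ℝ × ℝ)) (0, 1, 0) y :=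
  (hasDerivAt_const y x).prodMk ((hasDerivAt_id y).prodMk (hasDerivAt_const y t))

lemma hasDerivAt_sliceT (x y : ℝ) (t : ℝ) :
    HasDerivAt (fun s : ℝ => ((x, y, s) : ℝ × ℝ × ℝ)) (0, 0, 1) t :=
  (hasDerivAt_const t x).prodMk ((hasDerivAt_const t y).prodMk (hasDerivAt_id t))

lemma Sm.hdX {f : ℝ → ℝ → ℝ → V} (hf : Sm f) (x y t : ℝ) :
    HasDerivAt (fun s => f s y t) (pdx f x y t) x := by
  have h := ((hf.differentiable (by simp) (x, y, t)).hasFDerivAt.comp_hasDerivAt x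
    (hasDerivAt_sliceX y t x))
  have h2 : HasDerivAt (fun s => f s y t)
      (fderiv ℝ (unc f) (x, y, t) (1, 0, 0)) x := h
  simpa [pdx, h2.deriv] using h2

lemma Sm.hdY {f : ℝ → ℝ → ℝ → V} (hf : Sm f) (x y t : ℝ) :
    HasDerivAt (fun s => f x s t) (pdy f x y t) y := by
  have h : HasDerivAt (fun s => f x s t)
      (fderiv ℝ (unc f) (x, y, t) (0, 1, 0)) y := by
    have h' := ((hf.differentiable (by simp) (x, y, t)).hasFDerivAt.comp_hasDerivAt y
      (hasDerivAt_sliceY x t y))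
    exact h'
  simpa [pdy, h.deriv] using h

lemma Sm.hdT {f : ℝ → ℝ → ℝ → V} (hf : Sm f) (x y t : ℝ) :
    HasDerivAt (fun s => f x y s) (pdt f x y t) t := by
  have h : HasDerivAt (fun s => f x y s)
      (fderiv ℝ (unc f) (x, y, t) (0, 0, 1)) t := by
    have h' := ((hf.differentiable (by simp) (x, y, t)).hasFDerivAt.comp_hasDerivAt t
      (hasDerivAt_sliceT x y t))
    exact h'
  simpa [pdt, h.deriv] using h

lemma Sm.pdx_eq_fderiv {f : ℝ → ℝ → ℝ → V} (hf : Sm f) (x y t : ℝ) :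
    pdx f x y t = fderiv ℝ (unc f) (x, y, t) (1, 0, 0) := by
  have h : HasDerivAt (fun s => f s y t)
      (fderiv ℝ (unc f) (x, y, t) (1, 0, 0)) x := by
    have h' := ((hf.differentiable (by simp) (x, y, t)).hasFDerivAt.comp_hasDerivAt x
      (hasDerivAt_sliceX y t x))
    exact h'
  simpa [pdx] using h.deriv

lemma Sm.pdy_eq_fderiv {f : ℝ → ℝ → ℝ → V} (hf : Sm f) (x y t : ℝ) :
    pdy f x y t = fderiv ℝ (unc f) (x, y, t) (0, 1, 0) := by
  have h : HasDerivAt (fun s => f x s t)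
      (fderiv ℝ (unc f) (x, y, t) (0, 1, 0)) y := by
    have h' := ((hf.differentiable (by simp) (x, y, t)).hasFDerivAt.comp_hasDerivAt y
      (hasDerivAt_sliceY x t y))
    exact h'
  simpa [pdy] using h.deriv

lemma contDiff_dfderiv {F : ℝ × ℝ × ℝ → V} (hF : ContDiff ℝ (⊤ : ℕ∞) F)
    (w : ℝ × ℝ × ℝ) : ContDiff ℝ (⊤ : ℕ∞) (fun p => fderiv ℝ F p w) :=
  (hF.fderiv_right top_add_one).clm_apply contDiff_const

lemma Sm.smX {f : ℝ → ℝ → ℝ → V} (hf : Sm f) : Sm (pdx f) := by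
  have h : unc (pdx f) = fun p => fderiv ℝ (unc f) p (1, 0, 0) := by
    funext p
    exact hf.pdx_eq_fderiv p.1 p.2.1 p.2.2
  rw [Sm, h]
  exact contDiff_dfderiv hf _

lemma Sm.smY {f : ℝ → ℝ → ℝ → V} (hf : Sm f) : Sm (pdy f) := by
  have h : unc (pdy f) = fun p => fderiv ℝ (unc f) p (0, 1, 0) := by
    funext p
    exact hf.pdy_eq_fderiv p.1 p.2.1 p.2.2
  rw [Sm, h]
  exact contDiff_dfderiv hf _

lemma Sm.pdx_pdy_comm {f : ℝ → ℝ → ℝ → V} (hf : Sm f) :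
    pdy (pdx f) = pdx (pdy f) := by
  funext x y t
  have hx : unc (pdx f) = fun p => fderiv ℝ (unc f) p (1, 0, 0) := by
    funext p; exact hf.pdx_eq_fderiv p.1 p.2.1 p.2.2
  have hy : unc (pdy f) = fun p => fderiv ℝ (unc f) p (0, 1, 0) := by
    funext p; exact hf.pdy_eq_fderiv p.1 p.2.1 p.2.2
  have hdf : Differentiable ℝ (fderiv ℝ (unc f)) :=
    (hf.fderiv_right top_add_one).differentiable (by simp)
  have key : ∀ w w' : ℝ × ℝ × ℝ,
      fderiv ℝ (fun p => fderiv ℝ (unc f) p w) (x, y, t) w'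
        = fderiv ℝ (fderiv ℝ (unc f)) (x, y, t) w' w := by
    intro w w'
    have : (fun p => fderiv ℝ (unc f) p w)
        = fun p => (ContinuousLinearMap.apply ℝ V w) (fderiv ℝ (unc f) p) := rfl
    rw [this, fderiv_comp' (𝕜 := ℝ) _
      ((ContinuousLinearMap.apply ℝ V w).differentiableAt) (hdf _)]
    simp
  have symm := (hf.contDiffAt (x := (x, y, t))).isSymmSndFDerivAt (n := (⊤ : ℕ∞))
    (by rw [minSmoothness_of_isRCLikeNormedField]; exact_mod_cast le_top' (n := 2))
  calc pdy (pdx f) x y t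
      = fderiv ℝ (unc (pdx f)) (x, y, t) (0, 1, 0) :=
        (hf.smX).pdy_eq_fderiv x y t
    _ = fderiv ℝ (fun p => fderiv ℝ (unc f) p (1, 0, 0)) (x, y, t) (0, 1, 0) := by
        rw [hx]
    _ = fderiv ℝ (fderiv ℝ (unc f)) (x, y, t) (0, 1, 0) (1, 0, 0) := key _ _
    _ = fderiv ℝ (fderiv ℝ (unc f)) (x, y, t) (1, 0, 0) (0, 1, 0) := symm _ _
    _ = fderiv ℝ (fun p => fderiv ℝ (unc f) p (0, 1, 0)) (x, y, t) (1, 0, 0) :=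
        (key _ _).symm
    _ = fderiv ℝ (unc (pdy f)) (x, y, t) (1, 0, 0) := by rw [hy]
    _ = pdx (pdy f) x y t := ((hf.smY).pdx_eq_fderiv x y t).symm

end infra

section dotlemmas

variable {N : ℕ}

lemma ddcomm (a b : Fin N → ℝ) : dot a b = dot b a := by
  unfold dot; exact Finset.sum_congr rfl fun i _ => mul_comm _ _

lemma ddaddR (a b c : Fin N → ℝ) : dot a (b + c) = dot a b + dot a c := by
  simp [dot, Pi.add_apply, mul_add, Finset.sum_add_distrib]

lemma ddaddL (a b c : Fin N → ℝ) : dot (a + b) c = dot a c + dot b c := by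
  simp [dot, Pi.add_apply, add_mul, Finset.sum_add_distrib]

lemma ddsmulR (r : ℝ) (a b : Fin N → ℝ) : dot a (r • b) = r * dot a b := by
  simp [dot, Pi.smul_apply, smul_eq_mul, Finset.mul_sum, mul_comm, mul_left_comm]

lemma ddsmulL (r : ℝ) (a b : Fin N → ℝ) : dot (r • a) b = r * dot a b := by
  simp [dot, Pi.smul_apply, smul_eq_mul, Finset.mul_sum, mul_comm, mul_left_comm]

lemma HasDerivAt.dotD {x : ℝ} {a b : ℝ → (Fin N → ℝ)} {a' b' : Fin N → ℝ}
    (ha : HasDerivAt a a' x) (hb : HasDerivAt b b' x) :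
    HasDerivAt (fun s => dot (a s) (b s)) (dot a' (b x) + dot (a x) b') x := by
  have h : ∀ i ∈ Finset.univ, HasDerivAt (fun s => a s i * b s i)
      (a' i * b x i + a x i * b' i) x :=
    fun i _ => ((hasDerivAt_pi.1 ha i).mul (hasDerivAt_pi.1 hb i))
  have h2 := HasDerivAt.fun_sum h
  simpa [dot, Finset.sum_add_distrib] using h2

end dotlemmas

lemma ap3 {α : Type*} {f g : ℝ → ℝ → ℝ → α} (h : f = g) (x y t : ℝ) :
    f x y t = g x y t := by rw [h]

section cmul

lemma pdx_cmul {f : ℝ → ℝ → ℝ → ℝ} (hf : Sm f) (c : ℝ) :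
    pdx (fun x y t => c * f x y t) = fun x y t => c * pdx f x y t := by
  funext x y t
  exact ((hf.hdX x y t).const_mul c).deriv

lemma pdy_cmul {f : ℝ → ℝ → ℝ → ℝ} (hf : Sm f) (c : ℝ) :
    pdy (fun x y t => c * f x y t) = fun x y t => c * pdy f x y t := by
  funext x y t
  exact ((hf.hdY x y t).const_mul c).deriv

lemma pdt_cmul {f : ℝ → ℝ → ℝ → ℝ} (hf : Sm f) (c : ℝ) :
    pdt (fun x y t => c * f x y t) = fun x y t => c * pdt f x y t := by
  funext x y t
  exact ((hf.hdT x y t).const_mul c).deriv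

end cmul

theorem jordan_KdV_gives_2d_Sawada_Kotera (N : ℕ) (hN : 1 ≤ N)
    (u : ℝ → ℝ → ℝ → ℝ) (ψ : ℝ → ℝ → ℝ → (Fin N → ℝ))
    (hu : ContDiff ℝ (⊤ : ℕ∞) (fun p : ℝ × ℝ × ℝ => u p.1 p.2.1 p.2.2))
    (hψ : ContDiff ℝ (⊤ : ℕ∞) (fun p : ℝ × ℝ × ℝ => ψ p.1 p.2.1 p.2.2))
    (hKdV₁ : ∀ x y t, pdy u x y t = pdx (pdx (pdx u)) x y t
        + 3 * pdx (fun x y t => u x y t ^ 2 - dot (ψ x y t) (ψ x y t)) x y t)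
    (hKdV₂ : ∀ x y t, pdy ψ x y t = pdx (pdx (pdx ψ)) x y t
        + (6 : ℝ) • pdx (fun x y t => u x y t • ψ x y t) x y t)
    (hSym₁ : ∀ x y t, pdt u x y t = pdx (pdx (pdx (pdx (pdx u)))) x y t
        + 5 * pdx (fun x y t =>
            2 * u x y t * pdx (pdx u) x y t + pdx u x y t ^ 2 + 2 * u x y t ^ 3
              - 6 * u x y t * dot (ψ x y t) (ψ x y t)
              - 2 * dot (ψ x y t) (pdx (pdx ψ) x y t)
              - dot (pdx ψ x y t) (pdx ψ x y t)) x y t)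
    (hSym₂ : ∀ x y t, pdt ψ x y t = pdx (pdx (pdx (pdx (pdx ψ)))) x y t
        + (10 : ℝ) • pdx (fun x y t =>
            u x y t • pdx (pdx ψ) x y t + pdx u x y t • pdx ψ x y t
              + pdx (pdx u) x y t • ψ x y t + (3 * u x y t ^ 2) • ψ x y t
              - dot (ψ x y t) (ψ x y t) • ψ x y t) x y t)
    (v q : ℝ → ℝ → ℝ → ℝ)
    (hv : ∀ x y t, v x y t = 6 * u x y t)
    (hq : ∀ x y t, q x y t = 6 * pdx (pdx u) x y t + 18 * u x y t ^ 2
        - 18 * dot (ψ x y t) (ψ x y t)) :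
    (∀ x y t, -9 * pdt v x y t = pdx (pdx (pdx (pdx (pdx v)))) x y t
        + 5 * (v x y t * pdx (pdx (pdx v)) x y t + pdx v x y t * pdx (pdx v) x y t
            + v x y t ^ 2 * pdx v x y t - pdy (pdx (pdx v)) x y t
            - v x y t * pdy v x y t - q x y t * pdx v x y t - pdy q x y t)) ∧
    (∀ x y t, pdx q x y t = pdy v x y t) := by
  have S0 : Sm u := hu
  have T0 : Sm ψ := hψ
  have S1 : Sm (pdx u) := S0.smX
  have S2 : Sm (pdx (pdx u)) := S1.smX
  have S3 : Sm (pdx (pdx (pdx u))) := S2.smX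
  have S4 : Sm (pdx (pdx (pdx (pdx u)))) := S3.smX
  have T1 : Sm (pdx ψ) := T0.smX
  have T2 : Sm (pdx (pdx ψ)) := T1.smX
  -- refined first KdV equation
  have Yu : ∀ x y t, pdy u x y t = pdx (pdx (pdx u)) x y t
      + 6 * u x y t * pdx u x y t - 6 * dot (ψ x y t) (pdx ψ x y t) := by
    intro x y t
    have h := ((S0.hdX x y t).pow 2).sub ((T0.hdX x y t).dotD (T0.hdX x y t))
    have hA : pdx (fun x y t => u x y t ^ 2 - dot (ψ x y t) (ψ x y t)) x y t
        = 2 * u x y t * pdx u x y t - 2 * dot (ψ x y t) (pdx ψ x y t) := by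
      refine h.deriv.trans ?_
      try simp only [ddcomm]
      try push_cast
      ring
    rw [hKdV₁ x y t, hA]; ring
  have hYufun : pdy u = fun x y t => pdx (pdx (pdx u)) x y t
      + 6 * u x y t * pdx u x y t - 6 * dot (ψ x y t) (pdx ψ x y t) := by
    funext x y t; exact Yu x y t
  -- y-derivative of u_x
  have Yu1 : ∀ x y t, pdy (pdx u) x y t = pdx (pdx (pdx (pdx u))) x y t
      + 6 * pdx u x y t * pdx u x y t + 6 * u x y t * pdx (pdx u) x y t
      - 6 * dot (pdx ψ x y t) (pdx ψ x y t)
      - 6 * dot (ψ x y t) (pdx (pdx ψ) x y t) := by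
    intro x y t
    rw [ap3 S0.pdx_pdy_comm x y t, hYufun]
    have h := (((S3.hdX x y t).add
        (((S0.hdX x y t).const_mul 6).mul (S1.hdX x y t))).sub
      (((T0.hdX x y t).dotD (T1.hdX x y t)).const_mul 6))
    refine h.deriv.trans ?_
    try simp only [ddcomm]
    try push_cast
    ring
  have hYu1fun : pdy (pdx u) = fun x y t => pdx (pdx (pdx (pdx u))) x y t
      + 6 * pdx u x y t * pdx u x y t + 6 * u x y t * pdx (pdx u) x y t
      - 6 * dot (pdx ψ x y t) (pdx ψ x y t)
      - 6 * dot (ψ x y t) (pdx (pdx ψ) x y t) := by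
    funext x y t; exact Yu1 x y t
  -- y-derivative of u_xx
  have Yu2 : ∀ x y t, pdy (pdx (pdx u)) x y t
      = pdx (pdx (pdx (pdx (pdx u)))) x y t
      + 18 * pdx u x y t * pdx (pdx u) x y t
      + 6 * u x y t * pdx (pdx (pdx u)) x y t
      - 18 * dot (pdx ψ x y t) (pdx (pdx ψ) x y t)
      - 6 * dot (ψ x y t) (pdx (pdx (pdx ψ)) x y t) := by
    intro x y t
    rw [ap3 S1.pdx_pdy_comm x y t, hYu1fun]
    have h1 := ((S1.hdX x y t).const_mul 6).mul (S1.hdX x y t)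
    have h2 := ((S0.hdX x y t).const_mul 6).mul (S2.hdX x y t)
    have h3 := ((T1.hdX x y t).dotD (T1.hdX x y t)).const_mul 6
    have h4 := ((T0.hdX x y t).dotD (T2.hdX x y t)).const_mul 6
    have h := ((((S4.hdX x y t).add h1).add h2).sub h3).sub h4
    refine h.deriv.trans ?_
    try simp only [ddcomm]
    try push_cast
    ring
  -- refined second KdV equation
  have Yψ : ∀ x y t, pdy ψ x y t = pdx (pdx (pdx ψ)) x y t
      + (6 : ℝ) • (u x y t • pdx ψ x y t + pdx u x y t • ψ x y t) := by
    intro x y t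
    have H2 : pdx (fun x y t => u x y t • ψ x y t) x y t
        = u x y t • pdx ψ x y t + pdx u x y t • ψ x y t :=
      ((S0.hdX x y t).smul (T0.hdX x y t)).deriv
    rw [hKdV₂ x y t, H2]
  -- refined fifth-order symmetry
  have Tu : ∀ x y t, pdt u x y t = pdx (pdx (pdx (pdx (pdx u)))) x y t
      + 10 * u x y t * pdx (pdx (pdx u)) x y t
      + 20 * pdx u x y t * pdx (pdx u) x y t
      + 30 * u x y t ^ 2 * pdx u x y t
      - 30 * pdx u x y t * dot (ψ x y t) (ψ x y t)
      - 60 * u x y t * dot (ψ x y t) (pdx ψ x y t)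
      - 10 * dot (ψ x y t) (pdx (pdx (pdx ψ)) x y t)
      - 20 * dot (pdx ψ x y t) (pdx (pdx ψ) x y t) := by
    intro x y t
    have h1 := ((S0.hdX x y t).const_mul 2).mul (S2.hdX x y t)
    have h2 := (S1.hdX x y t).pow 2
    have h3 := ((S0.hdX x y t).pow 3).const_mul 2
    have h4 := ((S0.hdX x y t).const_mul 6).mul ((T0.hdX x y t).dotD (T0.hdX x y t))
    have h5 := ((T0.hdX x y t).dotD (T2.hdX x y t)).const_mul 2
    have h6 := (T1.hdX x y t).dotD (T1.hdX x y t)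
    have h := ((((h1.add h2).add h3).sub h4).sub h5).sub h6
    have hG : pdx (fun x y t =>
        2 * u x y t * pdx (pdx u) x y t + pdx u x y t ^ 2 + 2 * u x y t ^ 3
          - 6 * u x y t * dot (ψ x y t) (ψ x y t)
          - 2 * dot (ψ x y t) (pdx (pdx ψ) x y t)
          - dot (pdx ψ x y t) (pdx ψ x y t)) x y t
        = 2 * u x y t * pdx (pdx (pdx u)) x y t
          + 4 * pdx u x y t * pdx (pdx u) x y t
          + 6 * u x y t ^ 2 * pdx u x y t
          - 6 * pdx u x y t * dot (ψ x y t) (ψ x y t)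
          - 12 * u x y t * dot (ψ x y t) (pdx ψ x y t)
          - 2 * dot (ψ x y t) (pdx (pdx (pdx ψ)) x y t)
          - 4 * dot (pdx ψ x y t) (pdx (pdx ψ) x y t) := by
      refine h.deriv.trans ?_
      try simp only [ddcomm]
      try push_cast
      ring
    rw [hSym₁ x y t, hG]; ring
  -- the v chain
  have hvfun : v = fun x y t => 6 * u x y t := by funext x y t; exact hv x y t
  have hv1 : pdx v = fun x y t => 6 * pdx u x y t := by
    rw [hvfun]; exact pdx_cmul S0 6
  have hv2 : pdx (pdx v) = fun x y t => 6 * pdx (pdx u) x y t := by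
    rw [hv1]; exact pdx_cmul S1 6
  have hv3 : pdx (pdx (pdx v)) = fun x y t => 6 * pdx (pdx (pdx u)) x y t := by
    rw [hv2]; exact pdx_cmul S2 6
  have hv4 : pdx (pdx (pdx (pdx v)))
      = fun x y t => 6 * pdx (pdx (pdx (pdx u))) x y t := by
    rw [hv3]; exact pdx_cmul S3 6
  have hv5 : pdx (pdx (pdx (pdx (pdx v))))
      = fun x y t => 6 * pdx (pdx (pdx (pdx (pdx u)))) x y t := by
    rw [hv4]; exact pdx_cmul S4 6
  have hpdyv : pdy v = fun x y t => 6 * pdy u x y t := by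
    rw [hvfun]; exact pdy_cmul S0 6
  have hpdyv2 : pdy (pdx (pdx v)) = fun x y t => 6 * pdy (pdx (pdx u)) x y t := by
    rw [hv2]; exact pdy_cmul S2 6
  have hpdtv : pdt v = fun x y t => 6 * pdt u x y t := by
    rw [hvfun]; exact pdt_cmul S0 6
  have hv1' : ∀ x y t, pdx v x y t = 6 * pdx u x y t := fun x y t => ap3 hv1 x y t
  have hv2' : ∀ x y t, pdx (pdx v) x y t = 6 * pdx (pdx u) x y t :=
    fun x y t => ap3 hv2 x y t
  have hv3' : ∀ x y t, pdx (pdx (pdx v)) x y t = 6 * pdx (pdx (pdx u)) x y t :=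
    fun x y t => ap3 hv3 x y t
  have hv5' : ∀ x y t, pdx (pdx (pdx (pdx (pdx v)))) x y t
      = 6 * pdx (pdx (pdx (pdx (pdx u)))) x y t := fun x y t => ap3 hv5 x y t
  have hpdyv' : ∀ x y t, pdy v x y t = 6 * pdy u x y t :=
    fun x y t => ap3 hpdyv x y t
  have hpdyv2' : ∀ x y t, pdy (pdx (pdx v)) x y t
      = 6 * pdy (pdx (pdx u)) x y t := fun x y t => ap3 hpdyv2 x y t
  have hpdtv' : ∀ x y t, pdt v x y t = 6 * pdt u x y t :=
    fun x y t => ap3 hpdtv x y t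
  -- y-derivative of q
  have Qy : ∀ x y t, pdy q x y t
      = 6 * pdx (pdx (pdx (pdx (pdx u)))) x y t
        + 108 * pdx u x y t * pdx (pdx u) x y t
        + 72 * u x y t * pdx (pdx (pdx u)) x y t
        + 216 * u x y t ^ 2 * pdx u x y t
        - 108 * dot (pdx ψ x y t) (pdx (pdx ψ) x y t)
        - 72 * dot (ψ x y t) (pdx (pdx (pdx ψ)) x y t)
        - 432 * u x y t * dot (ψ x y t) (pdx ψ x y t)
        - 216 * pdx u x y t * dot (ψ x y t) (ψ x y t) := by
    intro x y t
    have h0 := (((S2.hdY x y t).const_mul 6).add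
        (((S0.hdY x y t).pow 2).const_mul 18)).sub
      (((T0.hdY x y t).dotD (T0.hdY x y t)).const_mul 18)
    have h := h0.congr_of_eventuallyEq
      (Filter.Eventually.of_forall (fun s => hq x s t))
    refine h.deriv.trans ?_
    rw [Yu2 x y t, Yu x y t, Yψ x y t]
    simp only [ddaddR, ddaddL, ddsmulR, ddsmulL]
    try simp only [ddcomm]
    try push_cast
    ring
  -- x-derivative of q
  have Qx : ∀ x y t, pdx q x y t
      = 6 * pdx (pdx (pdx u)) x y t + 36 * u x y t * pdx u x y t
        - 36 * dot (ψ x y t) (pdx ψ x y t) := by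
    intro x y t
    have h0 := (((S2.hdX x y t).const_mul 6).add
        (((S0.hdX x y t).pow 2).const_mul 18)).sub
      (((T0.hdX x y t).dotD (T0.hdX x y t)).const_mul 18)
    have h := h0.congr_of_eventuallyEq
      (Filter.Eventually.of_forall (fun s => hq s y t))
    refine h.deriv.trans ?_
    try simp only [ddcomm]
    try push_cast
    ring
  constructor
  · intro x y t
    rw [hpdtv' x y t, Tu x y t, hv5' x y t, hv3' x y t, hv1' x y t, hv2' x y t,
      hpdyv2' x y t, Yu2 x y t, hpdyv' x y t, Yu x y t, Qy x y t, hv x y t,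
      hq x y t]
    try simp only [ddcomm]
    try push_cast
    ring
  · intro x y t
    rw [Qx x y t, hpdyv' x y t, Yu x y t]
    ring
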